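/- arXiv:1808.06712 — 4 statements merged into one kernel-verified Lean document; each statement's English description precedes it below -/
import Mathlib

section
/- For any family {X_s}_{s∈S} of topological spaces and subsets A_s ⊆ X_s, the θ-closure of the product ∏_{s∈S} A_s in the product space X = ∏_{s∈S} X_s equals the product of the θ-closures: cl_θ(∏_{s∈S} A_s) = ∏_{s∈S} cl_θ(A_s). -/
open Set Topology Cardinal

universe u v

def thetaCl (X : Type u) [TopologicalSpace X] (A : Set X) : Set X :=
  {x | ∀ U : Set X, IsOpen U → x ∈ U → (closure U ∩ A).Nonempty}

def thetaClN (X : Type u) [TopologicalSpace X] (n : ℕ) (A : Set X) : Set X :=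
  (thetaCl X)^[n] A

def gammaCl (X : Type u) [TopologicalSpace X] (n : ℕ) (A : Set X) : Set X :=
  {x | ∀ U : Set X, IsOpen U → x ∈ U → (thetaClN X n U ∩ A).Nonempty}

def ThetaUrysohn (X : Type u) [TopologicalSpace X] (n : ℕ) : Prop :=
  ∀ x y : X, x ≠ y → ∃ U V : Set X, IsOpen U ∧ IsOpen V ∧ x ∈ U ∧ y ∈ V ∧
    thetaClN X n U ∩ thetaClN X n V = ∅

/-! A continuous map sends closures of preimages into closures, so it maps θ-closures into
θ-closures; applied to the projections this gives `⊆`. Conversely, every open neighbourhood of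
a point of the product contains a box `∏ V s` with `V s = univ` off a finite set, and
`closure (∏ V s) = ∏ closure (V s)`, so a point of `∏ (closure (V s) ∩ A s)` (chosen
coordinatewise) witnesses membership in the θ-closure of `∏ A s`. -/

theorem Continuous.mapsTo_thetaCl {X : Type u} {Y : Type v} [TopologicalSpace X]
    [TopologicalSpace Y] {f : X → Y} (hf : Continuous f) {A : Set X} {B : Set Y}
    (hAB : MapsTo f A B) : MapsTo f (thetaCl X A) (thetaCl Y B) := by
  intro x hx U hU hxU
  obtain ⟨y, hy_closure, hyA⟩ := hx (f ⁻¹' U) (hU.preimage hf) hxU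
  exact ⟨f y, map_mem_closure hf hy_closure fun _ h => h, hAB hyA⟩

theorem thetaCl_pi_subset_pi {S : Type u} (X : S → Type v) [∀ s, TopologicalSpace (X s)]
    (A : ∀ s, Set (X s)) :
    thetaCl (∀ s, X s) (univ.pi A) ⊆ univ.pi fun s => thetaCl (X s) (A s) :=
  fun _ hx s _ =>
    (continuous_apply s).mapsTo_thetaCl (A := univ.pi A) (B := A s)
      (fun _ hf => hf s (mem_univ s)) hx

theorem pi_thetaCl_subset_thetaCl_pi {S : Type u} (X : S → Type v)
    [∀ s, TopologicalSpace (X s)] (A : ∀ s, Set (X s)) :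
    (univ.pi fun s => thetaCl (X s) (A s)) ⊆ thetaCl (∀ s, X s) (univ.pi A) := by
  classical
  intro x hx U hU hxU
  obtain ⟨I, u, hu, hIu⟩ := isOpen_pi_iff.mp hU x hxU
  set V : ∀ s, Set (X s) := fun s => if s ∈ (I : Set S) then u s else univ
  have hV : ∀ s, IsOpen (V s) ∧ x s ∈ V s := fun s => by
    by_cases hs : s ∈ (I : Set S)
    · simpa only [V, if_pos hs] using hu s hs
    · simp only [V, if_neg hs, isOpen_univ, mem_univ, and_self]
  choose y hy_closure hyA using fun s => hx s (mem_univ s) (V s) (hV s).1 (hV s).2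
  have hy : y ∈ closure (univ.pi V) := by
    rw [closure_pi_set]
    exact fun s _ => hy_closure s
  rw [univ_pi_ite (I : Set S) u] at hy
  exact ⟨y, closure_mono hIu hy, fun s _ => hyA s⟩

theorem thetaCl_pi {S : Type u} (X : S → Type v) [∀ s, TopologicalSpace (X s)]
    (A : ∀ s, Set (X s)) :
    thetaCl (∀ s, X s) (Set.univ.pi A) = Set.univ.pi (fun s => thetaCl (X s) (A s)) :=
  (thetaCl_pi_subset_pi X A).antisymm (pi_thetaCl_subset_thetaCl_pi X A)
end

section
/- For every n ∈ ω with n ≥ 1 and any subset A of a topological space X, the n-θ-closure is contained in the Dikranjan–Giuli θⁿ-closure: cl_θⁿ(A) ⊆ cl_{θ^n}(A), where cl_θⁿ denotes the n-fold iterate of the θ-closure operator and cl_{θ^n} denotes the Dikranjan–Giuli θⁿ-closure. -/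
open Set Topology Cardinal

universe u v

/-- Dikranjan–Giuli closure: `dgCl X m` is the θ^(m+1)-closure, defined via chains
`U 0 ⊆ U 1 ⊆ ... ⊆ U m` of open neighborhoods with `closure (U i) ⊆ U (i+1)`. -/
def dgCl (X : Type u) [TopologicalSpace X] (m : ℕ) (M : Set X) : Set X :=
  {x | ∀ U : Fin (m + 1) → Set X, (∀ i, IsOpen (U i)) → (∀ i, x ∈ U i) →
    (∀ i : Fin m, closure (U i.castSucc) ⊆ U i.succ) →
    (closure (U (Fin.last m)) ∩ M).Nonempty}

/-!
If `x ∈ cl_θ(B)` and `U₀ ⊆ U₁ ⊆ ⋯ ⊆ U_{m+1}` is a Dikranjan–Giuli chain at `x`, then `cl(U₀)`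
meets `B` in a point `y`, and `cl(U₀) ⊆ U₁` makes the shifted chain `U₁ ⊆ ⋯ ⊆ U_{m+1}` a chain
at `y`. Hence `cl_θ(cl_{θ^{m+1}}(A)) ⊆ cl_{θ^{m+2}}(A)`, and the inclusion follows by induction
on the number of iterations, starting from `cl_θ(A) ⊆ cl_{θ^1}(A)`.
-/

section

variable {X : Type u} [TopologicalSpace X]

lemma thetaCl_mono : Monotone (thetaCl X) :=
  fun _ _ hAB _ hx U hU hxU => (hx U hU hxU).mono (inter_subset_inter_right _ hAB)

lemma thetaClN_succ (n : ℕ) (A : Set X) :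
    thetaClN X (n + 1) A = thetaCl X (thetaClN X n A) :=
  Function.iterate_succ_apply' _ _ _

lemma closure_subset_of_closure_chain {m : ℕ} {U : Fin (m + 2) → Set X}
    (hU : ∀ i : Fin (m + 1), closure (U i.castSucc) ⊆ U i.succ) (i : Fin (m + 1)) :
    closure (U 0) ⊆ U i.succ := by
  have hmono : Monotone U :=
    Fin.monotone_iff_le_succ.2 fun j => subset_closure.trans (hU j)
  exact (hU 0).trans (hmono (Fin.succ_le_succ_iff.2 (Fin.zero_le i)))

lemma thetaCl_subset_dgCl_zero (A : Set X) : thetaCl X A ⊆ dgCl X 0 A :=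
  fun _ hx U hU hxU _ => hx (U 0) (hU 0) (hxU 0)

lemma thetaCl_dgCl_subset_dgCl_succ (m : ℕ) (A : Set X) :
    thetaCl X (dgCl X m A) ⊆ dgCl X (m + 1) A := by
  intro x hx U hU hxU hchain
  obtain ⟨y, hyU, hyA⟩ := hx (U 0) (hU 0) (hxU 0)
  have hshift : ∀ i : Fin m, closure (U i.succ.castSucc) ⊆ U i.succ.succ := fun i => hchain i.succ
  simp only [← Fin.succ_castSucc] at hshift
  rw [← Fin.succ_last]
  exact hyA (fun i => U i.succ) (fun i => hU i.succ)
    (fun i => closure_subset_of_closure_chain hchain i hyU) hshift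

lemma thetaClN_succ_subset_dgCl (m : ℕ) (A : Set X) : thetaClN X (m + 1) A ⊆ dgCl X m A := by
  induction m with
  | zero => exact thetaCl_subset_dgCl_zero A
  | succ m ih =>
    rw [thetaClN_succ]
    exact (thetaCl_mono ih).trans (thetaCl_dgCl_subset_dgCl_succ m A)

end

theorem thetaClN_subset_dgCl (X : Type u) [TopologicalSpace X] (n : ℕ) (hn : 1 ≤ n)
    (A : Set X) : thetaClN X n A ⊆ dgCl X (n - 1) A := by
  obtain ⟨m, rfl⟩ := Nat.exists_eq_add_of_le' hn
  exact thetaClN_succ_subset_dgCl m A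
end

section
/- For any topological space X and any open subset U of X, the Dikranjan–Giuli θ²-closure of U equals the θ-closure of the closure of U, which equals the 2-fold iterated θ-closure of U: cl_{θ²}(U) = cl_θ(cl(U)) = cl_θ(cl_θ(U)). -/
open Set Topology Cardinal

universe u v

section

variable {X : Type u} [TopologicalSpace X]

theorem thetaCl_eq_closure_of_isOpen {U : Set X} (hU : IsOpen U) : thetaCl X U = closure U := by
  ext x
  simp only [thetaCl, mem_closure_iff]
  refine forall₂_congr fun V hV => imp_congr_right fun _ => ⟨?_, ?_⟩
  · rintro ⟨y, hyV, hyU⟩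
    obtain ⟨z, hzU, hzV⟩ := mem_closure_iff.mp hyV U hU hyU
    exact ⟨z, hzV, hzU⟩
  · rintro ⟨z, hzV, hzU⟩
    exact ⟨z, subset_closure hzV, hzU⟩

theorem thetaClN_two_eq_thetaCl_closure_of_isOpen {U : Set X} (hU : IsOpen U) :
    thetaClN X 2 U = thetaCl X (closure U) := by
  rw [thetaClN, Function.iterate_succ_apply', Function.iterate_one,
    thetaCl_eq_closure_of_isOpen hU]

theorem mem_dgCl_one_iff {M : Set X} {x : X} :
    x ∈ dgCl X 1 M ↔ ∀ V W : Set X, IsOpen V → IsOpen W → x ∈ V → x ∈ W →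
      closure V ⊆ W → (closure W ∩ M).Nonempty := by
  refine ⟨fun hx V W hV hW hxV hxW hVW => ?_, fun hx U hU hxU hUU => ?_⟩
  · exact hx ![V, W] (Fin.forall_fin_two.mpr ⟨hV, hW⟩) (Fin.forall_fin_two.mpr ⟨hxV, hxW⟩)
      (Fin.forall_fin_one.mpr hVW)
  · exact hx (U 0) (U 1) (hU 0) (hU 1) (hxU 0) (hxU 1) (hUU 0)

theorem thetaCl_closure_subset_dgCl_one (M : Set X) : thetaCl X (closure M) ⊆ dgCl X 1 M := by
  intro x hx
  refine mem_dgCl_one_iff.mpr fun V W hV hW hxV _ hVW => ?_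
  obtain ⟨y, hyV, hyM⟩ := hx V hV hxV
  obtain ⟨z, hzW, hzM⟩ := mem_closure_iff.mp hyM W hW (hVW hyV)
  exact ⟨z, subset_closure hzW, hzM⟩

theorem dgCl_one_subset_thetaCl_closure_of_isOpen {U : Set X} (hU : IsOpen U) :
    dgCl X 1 U ⊆ thetaCl X (closure U) := by
  intro x hx V hV hxV
  by_contra hVU
  have hVW : closure V ⊆ (closure U)ᶜ := fun y hyV hyU => hVU ⟨y, hyV, hyU⟩
  obtain ⟨z, hzW, hzU⟩ := mem_dgCl_one_iff.mp hx V _ hV isClosed_closure.isOpen_compl hxV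
    (hVW (subset_closure hxV)) hVW
  have hdisj : Disjoint U (closure (closure U)ᶜ) :=
    (disjoint_compl_right.mono_left subset_closure).closure_right hU
  exact hdisj.ne_of_mem hzU hzW rfl

end

theorem dgCl_two_eq_thetaCl_closure (X : Type u) [TopologicalSpace X] {U : Set X}
    (hU : IsOpen U) :
    dgCl X 1 U = thetaCl X (closure U) ∧ thetaCl X (closure U) = thetaClN X 2 U :=
  ⟨(dgCl_one_subset_thetaCl_closure_of_isOpen hU).antisymm (thetaCl_closure_subset_dgCl_one U),
    (thetaClN_two_eq_thetaCl_closure_of_isOpen hU).symm⟩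
end

section
/- A topological space X is θⁿ-Urysohn if and only if for every x ∈ X, the intersection over all open neighborhoods U of x of the sets cl_γⁿ(cl_θⁿ(U)) equals {x}. -/
open Set Topology Cardinal

universe u v

/-! A point `y` lies in `cl_γⁿ(cl_θⁿ U)` exactly when `cl_θⁿ U` meets `cl_θⁿ V` for every open
`V ∋ y`, and every point lies in the γ-closure of the θⁿ-closures of its neighbourhoods. So the
intersection is `{x}` precisely when every `y ≠ x` has an open `V ∋ y` whose θⁿ-closure misses that
of some open `U ∋ x`. -/

section

variable {X : Type u} [TopologicalSpace X]

theorem subset_thetaCl (A : Set X) : A ⊆ thetaCl X A :=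
  fun _ ha _ _ haU ↦ ⟨_, subset_closure haU, ha⟩

theorem subset_thetaClN (n : ℕ) (A : Set X) : A ⊆ thetaClN X n A := by
  induction n with
  | zero => exact subset_rfl
  | succ k ih =>
    rw [thetaClN, Function.iterate_succ_apply']
    exact ih.trans (subset_thetaCl _)

theorem mem_gammaCl_thetaClN_iff (n : ℕ) (U : Set X) (y : X) :
    y ∈ gammaCl X n (thetaClN X n U) ↔
      ∀ V : Set X, IsOpen V → y ∈ V → (thetaClN X n U ∩ thetaClN X n V).Nonempty :=
  forall₃_congr fun V _ _ ↦ by rw [inter_comm]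

theorem mem_gammaCl_thetaClN_self (n : ℕ) {U : Set X} {x : X} (hx : x ∈ U) :
    x ∈ gammaCl X n (thetaClN X n U) :=
  (mem_gammaCl_thetaClN_iff n U x).2 fun _ _ hxV ↦
    ⟨x, subset_thetaClN n U hx, subset_thetaClN n _ hxV⟩

theorem thetaUrysohn_iff_forall_notMem_gammaCl (n : ℕ) :
    ThetaUrysohn X n ↔ ∀ x y : X, x ≠ y →
      ∃ U : Set X, (IsOpen U ∧ x ∈ U) ∧ y ∉ gammaCl X n (thetaClN X n U) := by
  refine forall₃_congr fun x y _ ↦ ⟨?_, ?_⟩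
  · rintro ⟨U, V, hU, hV, hxU, hyV, hUV⟩
    exact ⟨U, ⟨hU, hxU⟩, fun hy ↦ ((mem_gammaCl_thetaClN_iff n U y).1 hy V hV hyV).ne_empty hUV⟩
  · rintro ⟨U, ⟨hU, hxU⟩, hy⟩
    simp only [mem_gammaCl_thetaClN_iff, not_forall, not_nonempty_iff_eq_empty] at hy
    obtain ⟨V, hV, hyV, hUV⟩ := hy
    exact ⟨U, V, hU, hV, hxU, hyV, hUV⟩

end

theorem thetaUrysohn_iff_iInter (X : Type u) [TopologicalSpace X] (n : ℕ) :
    ThetaUrysohn X n ↔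
      ∀ x : X, (⋂ U ∈ {U : Set X | IsOpen U ∧ x ∈ U},
        gammaCl X n (thetaClN X n U)) = {x} := by
  have hx_mem (x : X) : x ∈ ⋂ U ∈ {U : Set X | IsOpen U ∧ x ∈ U}, gammaCl X n (thetaClN X n U) :=
    mem_iInter₂.2 fun _ hU ↦ mem_gammaCl_thetaClN_self n hU.2
  simp only [thetaUrysohn_iff_forall_notMem_gammaCl, eq_singleton_iff_unique_mem, hx_mem, true_and]
  refine forall₂_congr fun x y ↦ ?_
  rw [not_imp_comm, eq_comm]
  simp only [mem_iInter₂, mem_ofPred_eq, not_exists, not_and, not_not, and_imp]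
end
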